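/- arXiv:0810.4314 — 2 statements merged into one kernel-verified Lean document; each statement's English description precedes it below -/
import Mathlib

section
/- Let (W,S) be a Coxeter group, w ∈ W with reduced word s_{i_1}⋯s_{i_m}, and v ≤ w in Bruhat order. Then there exists a unique subexpression s_{i_{j_1}}⋯s_{i_{j_k}} (with j_1 < ⋯ < j_k) that is a reduced word for v and satisfies: for each l = 0,…,k and each r with j_l < r ≤ j_{l+1} (where j_0 = 0 and j_{k+1} = m), one has s_{i_{j_1}}⋯s_{i_{j_l}} s_{i_r} > s_{i_{j_1}}⋯s_{i_{j_l}} in Bruhat order. -/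
/-!
Write `p_r` for the product of the letters of `J` before position `r` and `s = s_{i_r}`.
Positivity at `r` says `ℓ(p_r s) > ℓ(p_r)`; since `p_{r+1}` is `p_r s` or `p_r` according as
`r ∈ J`, it follows that `r ∈ J` iff `ℓ(p_{r+1} s) < ℓ(p_{r+1})`, that
`p_r = min(p_{r+1}, p_{r+1} s)`, and that `ℓ(p_{r+1}) = ℓ(p_r) + [r ∈ J]`. So, starting from
`p_m = v`, positivity determines `J` from right to left, and it forces the subword to be reduced.
Conversely the greedy descent `q_m = v`, `q_r = min(q_{r+1}, q_{r+1} s_{i_r})` yields a positive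
subexpression as soon as it ends at `q_0 = 1`. It does: `v ≤ w` gives a reduced subword of `ω`
for `v` (subword property), and each descent step keeps a reduced subword of the shorter prefix.

Both the subword property and the descent step rest on the strong exchange condition. It comes
from Tits' representation of `W` on `W × ℤ/2`, in which `s_i` sends `(t, ε)` to
`(s_i t s_i, ε + [t = s_i])`: the Coxeter relations hold because the left inversion sequence of
the word `(s_i s_j)^{m_ij}` is periodic with period `m_ij`, so the parity of the number of
occurrences of `t` in the left inversion sequence of a word depends only on its product.
-/

namespace PaperStmt

open CoxeterSystem

variable {B : Type} {W : Type} [Group W] {M : CoxeterMatrix B}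

/-- Bruhat covering relation: `w = u * t` for a reflection `t`, with
`ℓ(w) = ℓ(u) + 1`. -/
def BCov (cs : CoxeterSystem M W) (u w : W) : Prop :=
  (∃ t : W, cs.IsReflection t ∧ w = u * t) ∧ cs.length w = cs.length u + 1

/-- Bruhat order, as the reflexive-transitive closure of the covering
relation. -/
def BLE (cs : CoxeterSystem M W) : W → W → Prop :=
  Relation.ReflTransGen (BCov cs)

/-- The subword of `ω` consisting of the letters at positions in `J` that are
`< r`. -/
def maskWord (ω : List B) (J : Finset (Fin ω.length)) (r : ℕ) : List B :=
  ((List.finRange ω.length).filter (fun j => decide (j ∈ J ∧ j.val < r))).map ω.get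

/-- The product of the simple reflections of the subword of `ω` indexed by the
positions of `J` that are `< r`. -/
def prefixEl (cs : CoxeterSystem M W) (ω : List B) (J : Finset (Fin ω.length)) (r : ℕ) : W :=
  cs.wordProd (maskWord ω J r)

/-- `J` is the index set of the positive subexpression of `ω` for `v`:
the subword indexed by `J` is a reduced word for `v`, and for every position
`r` of `ω`, right multiplication of the partial product over `J`-indices `< r`
by `s_{i_r}` increases length.  (For `r` in the gap `j_l < r ≤ j_{l+1}`, the
partial product over `J`-indices `< r` is exactly `s_{i_{j_1}} ⋯ s_{i_{j_l}}`,
so this is the condition of the statement.) -/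
def IsPosSubexpr (cs : CoxeterSystem M W) (ω : List B) (J : Finset (Fin ω.length)) (v : W) :
    Prop :=
  cs.wordProd (maskWord ω J ω.length) = v ∧
  J.card = cs.length v ∧
  ∀ r : Fin ω.length,
    cs.length (prefixEl cs ω J r.val * cs.simple (ω.get r)) > cs.length (prefixEl cs ω J r.val)

end PaperStmt

namespace CoxeterSystem

variable {B : Type*} {W : Type*} [Group W] {M : CoxeterMatrix B} (cs : CoxeterSystem M W)

local prefix:100 "s " => cs.simple
local prefix:100 "π " => cs.wordProd
local prefix:100 "ℓ " => cs.length
local prefix:100 "lis " => cs.leftInvSeq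

theorem prod_map_alternatingWord {G : Type*} [Monoid G] (f : B → G) (i i' : B) (m : ℕ) :
    ((alternatingWord i i' (2 * m)).map f).prod = (f i * f i') ^ m := by
  induction m with
  | zero => simp [alternatingWord]
  | succ m ih =>
    rw [show 2 * (m + 1) = 2 * m + 1 + 1 by ring, alternatingWord_succ', alternatingWord_succ']
    simp [ih, pow_succ', mul_assoc]

theorem leftInvSeq_alternatingWord (i i' : B) (p : ℕ) :
    lis (alternatingWord i i' (2 * p)) =
      (List.range (2 * p)).map fun k => s i * (s i' * s i) ^ k := by
  refine List.ext_getElem (by simp) fun k hk _ => ?_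
  rw [getElem_leftInvSeq_alternatingWord cs i i' p k (by simpa using hk),
    prod_alternatingWord_eq_mul_pow]
  simp [Nat.not_even_bit1, Nat.add_div_of_dvd_right]

theorem even_count_leftInvSeq_alternatingWord [DecidableEq W] (i i' : B) (t : W) :
    Even ((lis (alternatingWord i i' (2 * M i i'))).count t) := by
  have hperiod : ((fun k => s i * (s i' * s i) ^ k) ∘ (M i i' + ·)) =
      fun k => s i * (s i' * s i) ^ k := by
    funext k
    simp [pow_add]
  rw [leftInvSeq_alternatingWord, two_mul, List.range_add, List.map_append, List.map_map,
    hperiod, List.count_append]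
  exact ⟨_, rfl⟩

theorem conj_simple_conj_simple (i : B) (t : W) :
    MulAut.conj (s i) (MulAut.conj (s i) t) = t := by
  simp [mul_assoc, cs.simple_mul_simple_cancel_left, inv_simple]

theorem conj_simple_eq_simple_iff (i : B) (t : W) : MulAut.conj (s i) t = s i ↔ t = s i := by
  rw [← (MulAut.conj (s i)).injective.eq_iff, conj_simple_conj_simple]
  simp [inv_simple]

section TitsRepresentation

variable [DecidableEq W]

def simplePerm (i : B) : Equiv.Perm (W × ZMod 2) :=
  Function.Involutive.toPerm
    (fun p => (MulAut.conj (s i) p.1, p.2 + if p.1 = s i then 1 else 0)) fun ⟨t, ε⟩ => by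
      simp only [conj_simple_conj_simple, conj_simple_eq_simple_iff, add_assoc,
        CharTwo.add_self_eq_zero, add_zero]

theorem prod_map_simplePerm_apply (ω : List B) (t : W) (ε : ZMod 2) :
    (ω.map cs.simplePerm).prod (t, ε) =
      (MulAut.conj (π ω) t, ε + (lis ω).count (MulAut.conj (π ω) t)) := by
  induction ω generalizing t ε with
  | nil => simp
  | cons i ω ih =>
    rw [List.map_cons, List.prod_cons, Equiv.Perm.mul_apply, ih, wordProd_cons, map_mul,
      MulAut.mul_apply, leftInvSeq, List.count_cons,
      List.count_map_of_injective _ _ (MulAut.conj _).injective]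
    generalize MulAut.conj (π ω) t = t'
    have hfix : s i * t' = 1 ↔ t' = s i := by rw [mul_eq_one_iff_inv_eq, inv_simple, eq_comm]
    by_cases h : t' = s i <;> simp [simplePerm, hfix, h, add_assoc]

theorem isLiftable_simplePerm : M.IsLiftable cs.simplePerm := by
  intro i i'
  have hone : π (alternatingWord i i' (2 * M i i')) = 1 := by
    rw [wordProd, prod_map_alternatingWord, simple_mul_simple_pow]
  ext ⟨t, ε⟩ : 1
  rw [← prod_map_alternatingWord, prod_map_simplePerm_apply, hone]
  obtain ⟨k, hk⟩ := cs.even_count_leftInvSeq_alternatingWord i i' t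
  simp [hk, CharTwo.add_self_eq_zero]

noncomputable def titsRep : W →* Equiv.Perm (W × ZMod 2) :=
  cs.lift ⟨cs.simplePerm, cs.isLiftable_simplePerm⟩

theorem titsRep_wordProd (ω : List B) : cs.titsRep (π ω) = (ω.map cs.simplePerm).prod := by
  rw [wordProd, map_list_prod, List.map_map]
  congr 1
  exact List.map_congr_left fun i _ => cs.lift_apply_simple cs.isLiftable_simplePerm i

noncomputable def inversionParity (w t : W) : ZMod 2 :=
  (cs.titsRep w (MulAut.conj w⁻¹ t, 0)).2

theorem inversionParity_wordProd (ω : List B) (t : W) :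
    cs.inversionParity (π ω) t = (lis ω).count t := by
  simp [inversionParity, titsRep_wordProd, prod_map_simplePerm_apply, mul_assoc]

theorem titsRep_apply (w t : W) (ε : ZMod 2) :
    cs.titsRep w (t, ε) = (MulAut.conj w t, ε + cs.inversionParity w (MulAut.conj w t)) := by
  obtain ⟨ω, rfl⟩ := cs.wordProd_surjective w
  rw [inversionParity_wordProd, titsRep_wordProd, prod_map_simplePerm_apply]

theorem inversionParity_mul (x y t : W) :
    cs.inversionParity (x * y) t =
      cs.inversionParity x t + cs.inversionParity y (MulAut.conj x⁻¹ t) := by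
  rw [inversionParity, map_mul, Equiv.Perm.mul_apply, titsRep_apply, titsRep_apply]
  simp [mul_assoc, add_comm]

theorem inversionParity_one (t : W) : cs.inversionParity 1 t = 0 := by
  simp [inversionParity]

theorem inversionParity_simple (i : B) : cs.inversionParity (s i) (s i) = 1 := by
  rw [← wordProd_singleton, inversionParity_wordProd]
  simp

theorem inversionParity_self {t : W} (ht : cs.IsReflection t) : cs.inversionParity t t = 1 := by
  obtain ⟨u, i, rfl⟩ := ht
  have hinv := cs.inversionParity_mul u u⁻¹ (u * s i * u⁻¹)
  rw [mul_inv_cancel, inversionParity_one] at hinv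
  have h₁ : MulAut.conj u⁻¹ (u * s i * u⁻¹) = s i := by simp [mul_assoc]
  have h₂ : MulAut.conj (u * s i)⁻¹ (u * s i * u⁻¹) = s i := by
    simp [mul_assoc, inv_simple]
  rw [inversionParity_mul, inversionParity_mul, h₁, h₂, inversionParity_simple]
  rw [h₁] at hinv
  linear_combination -hinv

theorem length_mul_lt_of_inversionParity_eq_one {w t : W} (h : cs.inversionParity w t = 1) :
    ℓ (t * w) < ℓ w := by
  obtain ⟨ω, hω, rfl⟩ := cs.exists_isReduced w
  rw [inversionParity_wordProd] at h
  have hpos : 0 < (lis ω).count t := Nat.pos_of_ne_zero fun h₀ => by simp [h₀] at h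
  exact (cs.isLeftInversion_of_mem_leftInvSeq hω (List.count_pos_iff.mp hpos)).2

theorem inversionParity_eq_one_of_length_mul_lt {w t : W} (ht : cs.IsReflection t)
    (h : ℓ (t * w) < ℓ w) : cs.inversionParity w t = 1 := by
  have hcocycle : cs.inversionParity w t = 1 + cs.inversionParity (t * w) t := by
    conv_lhs => rw [← one_mul w, ← ht.mul_self, mul_assoc]
    rw [inversionParity_mul, inversionParity_self cs ht]
    simp [ht.inv, ht.mul_self]
  by_contra hne
  have hflip : ∀ a b : ZMod 2, a = 1 + b → a ≠ 1 → b = 1 := by decide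
  have := cs.length_mul_lt_of_inversionParity_eq_one (hflip _ _ hcocycle hne)
  rw [← mul_assoc, ht.mul_self, one_mul] at this
  omega

end TitsRepresentation

theorem mem_leftInvSeq_of_length_mul_lt {ω : List B} {t : W} (ht : cs.IsReflection t)
    (h : ℓ (t * π ω) < ℓ (π ω)) : t ∈ lis ω := by
  classical
  have hodd := cs.inversionParity_eq_one_of_length_mul_lt ht h
  rw [inversionParity_wordProd] at hodd
  exact List.count_pos_iff.mp (Nat.pos_of_ne_zero fun h₀ => by simp [h₀] at hodd)

/-- The strong exchange condition. -/
theorem exists_wordProd_mul_eq_wordProd_eraseIdx {ω : List B} {t : W} (ht : cs.IsReflection t)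
    (h : ℓ (π ω * t) < ℓ (π ω)) : ∃ j < ω.length, π ω * t = π (ω.eraseIdx j) := by
  have hconj : π ω * t * (π ω)⁻¹ * π ω = π ω * t := by group
  obtain ⟨j, hj, hjt⟩ := List.mem_iff_getElem.mp
    (cs.mem_leftInvSeq_of_length_mul_lt (ht.conj (π ω)) (hconj ▸ h))
  refine ⟨j, by simpa using hj, ?_⟩
  rw [← hconj, ← hjt, ← List.getD_eq_getElem _ 1 hj, getD_leftInvSeq_mul_wordProd]

def HasReducedSubword (ω : List B) (v : W) : Prop :=
  ∃ σ, σ.Sublist ω ∧ cs.IsReduced σ ∧ π σ = v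

variable {cs}

theorem HasReducedSubword.mul_reflection {ω : List B} {u t : W} (h : cs.HasReducedSubword ω u)
    (ht : cs.IsReflection t) (hlen : ℓ (u * t) + 1 = ℓ u) :
    cs.HasReducedSubword ω (u * t) := by
  obtain ⟨σ, hσω, hσ, rfl⟩ := h
  obtain ⟨j, hj, hprod⟩ := cs.exists_wordProd_mul_eq_wordProd_eraseIdx (ω := σ) ht (by omega)
  refine ⟨σ.eraseIdx j, (σ.eraseIdx_sublist j).trans hσω, ?_, hprod.symm⟩
  have := List.length_eraseIdx_add_one hj
  rw [IsReduced, ← hprod]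
  rw [IsReduced] at hσ
  omega

variable (cs)

/-- `min (u, u * s i)` in the Bruhat order. -/
noncomputable def descentStep (i : B) (u : W) : W :=
  if ℓ (u * s i) < ℓ u then u * s i else u

variable {cs}

theorem descentStep_mul_simple {u : W} {i : B} (h : ℓ u < ℓ (u * s i)) :
    cs.descentStep i (u * s i) = u := by
  rw [descentStep, simple_mul_simple_cancel_right, if_pos h]

theorem descentStep_of_length_lt {u : W} {i : B} (h : ℓ u < ℓ (u * s i)) :
    cs.descentStep i u = u := by
  rw [descentStep, if_neg (by omega)]

theorem length_descentStep_lt (i : B) (u : W) :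
    ℓ (cs.descentStep i u) < ℓ (cs.descentStep i u * s i) := by
  unfold descentStep
  split_ifs with h
  · rwa [simple_mul_simple_cancel_right]
  · have := cs.length_mul_simple_ne u i
    omega

theorem descentStep_mul_ite (i : B) (u : W) :
    cs.descentStep i u * (if ℓ (u * s i) < ℓ u then s i else 1) = u := by
  unfold descentStep
  split_ifs <;> simp [simple_mul_simple_cancel_right]

theorem HasReducedSubword.descentStep_of_append_singleton {ω : List B} {i : B} {v : W}
    (h : cs.HasReducedSubword (ω ++ [i]) v) : cs.HasReducedSubword ω (cs.descentStep i v) := by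
  obtain ⟨σ, hσω, hσ, rfl⟩ := h
  obtain ⟨σ, σ', rfl, hσ₁, hσ₂⟩ := List.sublist_append_iff.mp hσω
  rcases List.sublist_singleton.mp hσ₂ with rfl | rfl
  · rw [List.append_nil] at hσ ⊢
    unfold descentStep
    split_ifs with hlt
    · have := cs.length_mul_simple (π σ) i
      exact HasReducedSubword.mul_reflection ⟨σ, hσ₁, hσ, rfl⟩ (cs.isReflection_simple i)
        (by omega)
    · exact ⟨σ, hσ₁, hσ, rfl⟩
  · have hσ' : cs.IsReduced σ := by simpa using hσ.take σ.length
    have hlt : ℓ (π (σ ++ [i]) * s i) < ℓ (π (σ ++ [i])) := by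
      rw [IsReduced] at hσ hσ'
      rw [hσ, wordProd_append, wordProd_singleton, simple_mul_simple_cancel_right, hσ']
      simp
    rw [descentStep, if_pos hlt, wordProd_append, wordProd_singleton,
      simple_mul_simple_cancel_right]
    exact ⟨σ, hσ₁, hσ', rfl⟩

theorem HasReducedSubword.foldr_descentStep_eq_one {ω : List B} {v : W}
    (h : cs.HasReducedSubword ω v) : ω.foldr cs.descentStep v = 1 := by
  induction ω using List.reverseRecOn generalizing v with
  | nil =>
    obtain ⟨σ, hσ, -, rfl⟩ := h
    simp [List.sublist_nil.mp hσ]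
  | append_singleton ω i ih =>
    rw [List.foldr_append, List.foldr_cons, List.foldr_nil]
    exact ih h.descentStep_of_append_singleton

end CoxeterSystem

namespace PaperStmt

open CoxeterSystem

variable {B : Type} {W : Type} [Group W] {M : CoxeterMatrix B}

section MaskWord

variable {ω : List B} (J : Finset (Fin ω.length))

theorem maskWord_eq_filter_take (r : ℕ) :
    maskWord ω J r = (((List.finRange ω.length).take r).filter (· ∈ J)).map ω.get := by
  unfold maskWord
  congr 1
  conv_lhs => rw [← List.take_append_drop r (List.finRange ω.length)]
  have hlt : ∀ j ∈ (List.finRange ω.length).take r, j.val < r := by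
    intro j hj
    obtain ⟨k, hk, rfl⟩ := List.mem_take_iff_getElem.mp hj
    simp only [List.getElem_finRange, Fin.val_cast]
    omega
  have hge : ∀ j ∈ (List.finRange ω.length).drop r, r ≤ j.val := by
    intro j hj
    obtain ⟨k, hk, rfl⟩ := List.mem_drop_iff_getElem.mp hj
    simp
  have htake : ((List.finRange ω.length).take r).filter (fun j => decide (j ∈ J ∧ j.val < r)) =
      ((List.finRange ω.length).take r).filter (· ∈ J) :=
    List.filter_congr fun j hj => by simp [hlt j hj]
  have hdrop : ((List.finRange ω.length).drop r).filter (fun j => decide (j ∈ J ∧ j.val < r)) =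
      [] :=
    List.filter_eq_nil_iff.mpr fun j hj => by simp [hge j hj]
  rw [List.filter_append, htake, hdrop, List.append_nil]

theorem maskWord_zero : maskWord ω J 0 = [] := by
  simp [maskWord_eq_filter_take]

theorem maskWord_succ (r : Fin ω.length) :
    maskWord ω J (r + 1) = maskWord ω J r ++ if r ∈ J then [ω.get r] else [] := by
  rw [maskWord_eq_filter_take, maskWord_eq_filter_take, List.take_add_one,
    List.getElem?_eq_getElem (by simp)]
  split_ifs with h <;> simp [h]

theorem length_maskWord_length : (maskWord ω J ω.length).length = J.card := by
  rw [maskWord_eq_filter_take, List.take_of_length_le (by simp), List.length_map,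
    ← List.toFinset_card_of_nodup ((List.nodup_finRange _).filter _)]
  congr
  ext j
  simp

end MaskWord

section Positivity

variable (cs : CoxeterSystem M W)

local prefix:100 "s " => cs.simple
local prefix:100 "π " => cs.wordProd
local prefix:100 "ℓ " => cs.length

theorem prefixEl_succ {ω : List B} (J : Finset (Fin ω.length)) (r : Fin ω.length) :
    prefixEl cs ω J (r + 1) = prefixEl cs ω J r * if r ∈ J then s (ω.get r) else 1 := by
  unfold prefixEl
  rw [maskWord_succ]
  split_ifs <;> simp [wordProd_append]

noncomputable def rightmostPrefix (ω : List B) (v : W) (r : ℕ) : W :=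
  (ω.drop r).foldr cs.descentStep v

noncomputable def rightmostSubexpr (ω : List B) (v : W) : Finset (Fin ω.length) :=
  Finset.univ.filter fun r =>
    ℓ (rightmostPrefix cs ω v (r + 1) * s (ω.get r)) < ℓ (rightmostPrefix cs ω v (r + 1))

variable {cs}

theorem BLE.hasReducedSubword {ω : List B} {v : W} (hvw : BLE cs v (π ω))
    (hred : cs.IsReduced ω) : cs.HasReducedSubword ω v := by
  induction hvw using Relation.ReflTransGen.head_induction_on with
  | refl => exact ⟨ω, .refl ω, hred, rfl⟩
  | @head u _ hcov _ ih =>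
    obtain ⟨⟨t, ht, rfl⟩, hlen⟩ := hcov
    have hcancel : u * t * t = u := by rw [mul_assoc, ht.mul_self, mul_one]
    have := ih.mul_reflection ht (by rw [hcancel, hlen])
    rwa [hcancel] at this

theorem rightmostPrefix_length (ω : List B) (v : W) : rightmostPrefix cs ω v ω.length = v := by
  simp [rightmostPrefix]

theorem rightmostPrefix_of_lt {ω : List B} (v : W) (r : Fin ω.length) :
    rightmostPrefix cs ω v r = cs.descentStep (ω.get r) (rightmostPrefix cs ω v (r + 1)) := by
  rw [rightmostPrefix, List.drop_eq_getElem_cons r.isLt]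
  rfl

theorem mem_rightmostSubexpr {ω : List B} {v : W} {r : Fin ω.length} :
    r ∈ rightmostSubexpr cs ω v ↔
      ℓ (rightmostPrefix cs ω v (r + 1) * s (ω.get r)) <
        ℓ (rightmostPrefix cs ω v (r + 1)) := by
  simp [rightmostSubexpr]

theorem isReduced_maskWord {ω : List B} {J : Finset (Fin ω.length)}
    (hpos : ∀ r : Fin ω.length,
      ℓ (prefixEl cs ω J r) < ℓ (prefixEl cs ω J r * s (ω.get r)))
    {r : ℕ} (hr : r ≤ ω.length) : cs.IsReduced (maskWord ω J r) := by
  induction r with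
  | zero => simp [CoxeterSystem.IsReduced, maskWord_zero]
  | succ r ih =>
    have hlen := cs.length_mul_simple (prefixEl cs ω J r) (ω.get ⟨r, hr⟩)
    have hlt : ℓ (prefixEl cs ω J r) < ℓ (prefixEl cs ω J r * s (ω.get ⟨r, hr⟩)) :=
      hpos ⟨r, hr⟩
    have ih := ih (by omega)
    unfold CoxeterSystem.IsReduced prefixEl at *
    rw [maskWord_succ J ⟨r, hr⟩]
    dsimp only
    split_ifs
    · rw [List.length_append, wordProd_append, List.length_singleton, wordProd_singleton]
      omega
    · rwa [List.append_nil]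

theorem IsPosSubexpr.prefixEl_eq {ω : List B} {J : Finset (Fin ω.length)} {v : W}
    (hJ : IsPosSubexpr cs ω J v) {r : ℕ} (hr : r ≤ ω.length) :
    prefixEl cs ω J r = rightmostPrefix cs ω v r := by
  induction hr using Nat.decreasingInduction with
  | self => rw [rightmostPrefix_length]; exact hJ.1
  | of_succ r hr ih =>
    have hpos := hJ.2.2 ⟨r, hr⟩
    rw [rightmostPrefix_of_lt v ⟨r, hr⟩, ← ih, prefixEl_succ cs J ⟨r, hr⟩]
    split_ifs
    · exact (descentStep_mul_simple hpos).symm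
    · rw [mul_one]
      exact (descentStep_of_length_lt hpos).symm

theorem IsPosSubexpr.eq_rightmostSubexpr {ω : List B} {J : Finset (Fin ω.length)} {v : W}
    (hJ : IsPosSubexpr cs ω J v) : J = rightmostSubexpr cs ω v := by
  ext r
  have hpos := hJ.2.2 r
  rw [mem_rightmostSubexpr, ← hJ.prefixEl_eq r.isLt, prefixEl_succ]
  split_ifs with h
  · simp only [h, simple_mul_simple_cancel_right, true_iff]
    exact hpos
  · simp only [h, mul_one, false_iff, not_lt]
    exact hpos.le

theorem isPosSubexpr_rightmostSubexpr {ω : List B} {v : W} (h₀ : rightmostPrefix cs ω v 0 = 1) :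
    IsPosSubexpr cs ω (rightmostSubexpr cs ω v) v := by
  have hprefix : ∀ r ≤ ω.length,
      prefixEl cs ω (rightmostSubexpr cs ω v) r = rightmostPrefix cs ω v r := by
    intro r hr
    induction r with
    | zero => simp [prefixEl, maskWord_zero, h₀]
    | succ r ih =>
      rw [prefixEl_succ _ _ ⟨r, hr⟩, ih (by omega), rightmostPrefix_of_lt v ⟨r, hr⟩]
      simp only [mem_rightmostSubexpr]
      exact descentStep_mul_ite _ _
  have hpos : ∀ r : Fin ω.length, ℓ (prefixEl cs ω (rightmostSubexpr cs ω v) r) <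
      ℓ (prefixEl cs ω (rightmostSubexpr cs ω v) r * s (ω.get r)) := fun r => by
    rw [hprefix r r.isLt.le, rightmostPrefix_of_lt]
    exact length_descentStep_lt _ _
  have hv : π (maskWord ω (rightmostSubexpr cs ω v) ω.length) = v :=
    (hprefix _ le_rfl).trans (rightmostPrefix_length ω v)
  refine ⟨hv, ?_, hpos⟩
  rw [← length_maskWord_length, ← isReduced_maskWord hpos le_rfl, hv]

end Positivity

theorem positive_subexpression_exists_unique
    (cs : CoxeterSystem M W) (ω : List B) (w v : W)
    (hred : cs.IsReduced ω) (hw : cs.wordProd ω = w) (hvw : BLE cs v w) :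
    ∃! J : Finset (Fin ω.length), IsPosSubexpr cs ω J v := by
  subst hw
  have h₀ : rightmostPrefix cs ω v 0 = 1 :=
    (hvw.hasReducedSubword hred).foldr_descentStep_eq_one
  exact ⟨_, isPosSubexpr_rightmostSubexpr h₀, fun J hJ => hJ.eq_rightmostSubexpr⟩

end PaperStmt
end

section
/- Let W be a Weyl group, W_J a parabolic subgroup, and consider the poset Q^J on I^J ∪ {0̂} as above, where the rank of (x,u,w) is ℓ(wu) − ℓ(x) + 1 and rank(0̂) = 0. Every covering relation (x',u',w') ⋖ (x,u,w) in I^J satisfies exactly one of: (Type 1) w' = w and x u^{-1} ⋖ x'(u')^{-1} in Bruhat order; or (Type 2) x' = x with w' < w and w'u' ⋖ wu in Bruhat order. -/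
/-!
STATEMENT 14 (Lemma 9.2): every covering relation `(x',u',w') ⋖ (x,u,w)`
between elements of `I^J` (i.e. `(x',u',w') < (x,u,w)` with
`ℓ(wu) − ℓ(x) = ℓ(w'u') − ℓ(x') + 1`) is of exactly one of two types:
Type 1: `w' = w` and `xu⁻¹ ⋖ x'(u')⁻¹` in Bruhat order;
Type 2: `x' = x`, `w' < w`, and `w'u' ⋖ wu` in Bruhat order.
-/

namespace PaperStmt

open CoxeterSystem

variable {B : Type} {W : Type} [Group W] {M : CoxeterMatrix B}

/-- Membership in the standard parabolic subgroup `W_J`. -/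
def MemWJ (cs : CoxeterSystem M W) (J : Set B) (u : W) : Prop :=
  u ∈ Subgroup.closure (cs.simple '' J)

/-- `w` is a minimal-length coset representative of `w W_J`. -/
def IsMinRep (cs : CoxeterSystem M W) (J : Set B) (w : W) : Prop :=
  ∀ j ∈ J, cs.length (w * cs.simple j) = cs.length w + 1

/-- `x` is a maximal-length coset representative of `x W_J`. -/
def IsMaxRep (cs : CoxeterSystem M W) (J : Set B) (x : W) : Prop :=
  ∀ j ∈ J, cs.length (x * cs.simple j) + 1 = cs.length x

/-- The index set `I^J`. -/
def MemIJ (cs : CoxeterSystem M W) (J : Set B) (t : W × W × W) : Prop :=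
  IsMaxRep cs J t.1 ∧ MemWJ cs J t.2.1 ∧ IsMinRep cs J t.2.2 ∧
    BLE cs t.1 (t.2.2 * t.2.1)

/-- The order relation on `I^J` (`a` below `b`). -/
def QleJ (cs : CoxeterSystem M W) (J : Set B) (a b : W × W × W) : Prop :=
  ∃ u₁ u₂ : W, MemWJ cs J u₁ ∧ MemWJ cs J u₂ ∧ u₁ * u₂ = a.2.1 ∧
    cs.length a.2.1 = cs.length u₁ + cs.length u₂ ∧
    BLE cs (b.1 * b.2.1⁻¹) (a.1 * u₂⁻¹) ∧
    BLE cs (a.1 * u₂⁻¹) (a.2.2 * u₁) ∧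
    BLE cs (a.2.2 * u₁) b.2.2

/-- The dimension `ℓ(wu) − ℓ(x)` of the cell indexed by `(x,u,w)`. -/
noncomputable def cellDim (cs : CoxeterSystem M W) (t : W × W × W) : ℕ :=
  cs.length (t.2.2 * t.2.1) - cs.length t.1

open CoxeterSystem List
open scoped Classical
set_option linter.unusedSectionVars false

variable {B : Type} {W : Type} [Group W] {M : CoxeterMatrix B} (cs : CoxeterSystem M W)

local prefix:100 "σ" => cs.simple
local prefix:100 "π" => cs.wordProd
local prefix:100 "ℒ" => cs.length

/-- Indicator-sum (mod 2) of occurrences of `t` in a list. -/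
noncomputable def ctr (l : List W) (t : W) : ZMod 2 :=
  (l.map (fun r => if r = t then (1 : ZMod 2) else 0)).sum

lemma ctr_nil (t : W) : ctr ([] : List W) t = 0 := rfl

lemma ctr_cons (r : W) (l : List W) (t : W) :
    ctr (r :: l) t = (if r = t then (1 : ZMod 2) else 0) + ctr l t := by
  simp [ctr]

lemma ctr_append (l₁ l₂ : List W) (t : W) :
    ctr (l₁ ++ l₂) t = ctr l₁ t + ctr l₂ t := by
  simp [ctr]

lemma ctr_reverse (l : List W) (t : W) :
    ctr l.reverse t = ctr l t := by
  simp [ctr, List.map_reverse, List.sum_reverse]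

lemma ctr_map_of_injective (l : List W) (f : W → W) (hf : Function.Injective f) (a : W) :
    ctr (l.map f) (f a) = ctr l a := by
  simp only [ctr, List.map_map]
  congr 1
  apply List.map_congr_left
  intro r _
  simp only [Function.comp_apply]
  by_cases h : r = a
  · simp [h]
  · rw [if_neg h, if_neg (fun hc => h (hf hc))]

lemma ctr_eq_zero_of_not_mem (l : List W) (t : W) (h : t ∉ l) : ctr l t = 0 := by
  induction l with
  | nil => rfl
  | cons r l ih =>
    rw [ctr_cons, if_neg (fun hc => h (by rw [← hc]; exact List.mem_cons_self)),
      ih (fun hc => h (List.mem_cons_of_mem r hc)), add_zero]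

lemma zmod2_cases (x : ZMod 2) : x = 0 ∨ x = 1 := by revert x; decide

lemma zmod2_add_self (x : ZMod 2) : x + x = 0 := by revert x; decide

private noncomputable def pfun (i : B) : W × ZMod 2 → W × ZMod 2 :=
  fun p => (σ i * p.1 * σ i, p.2 + if p.1 = σ i then 1 else 0)

private lemma pfun_invol (i : B) (p : W × ZMod 2) : pfun cs i (pfun cs i p) = p := by
  obtain ⟨t, ε⟩ := p
  have h1 : σ i * (σ i * t * σ i) * σ i = t := by
    rw [← mul_assoc, ← mul_assoc, cs.simple_mul_simple_self, one_mul, mul_assoc,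
      cs.simple_mul_simple_self, mul_one]
  have h2 : (σ i * t * σ i = σ i) ↔ (t = σ i) := by
    constructor
    · intro h
      have h3 := congrArg (fun z => σ i * z * σ i) h
      rw [h1] at h3
      rw [h3, cs.simple_mul_simple_self, one_mul]
    · rintro rfl; rw [cs.simple_mul_simple_self, one_mul]
  simp only [pfun]
  ext
  · exact h1
  · simp only
    by_cases h : t = σ i
    · rw [if_pos h]; simp only [h2.mpr h, ↓reduceIte, add_assoc, zmod2_add_self, add_zero]
    · rw [if_neg h]; simp only [show ¬ (σ i * t * σ i = σ i) from fun hc => h (h2.mp hc), ↓reduceIte, add_zero]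

/-- The basic reflection-counting permutation associated to a simple reflection. -/
noncomputable def prefl (i : B) : Equiv.Perm (W × ZMod 2) where
  toFun := pfun cs i
  invFun := pfun cs i
  left_inv := pfun_invol cs i
  right_inv := pfun_invol cs i

lemma prefl_apply (i : B) (t : W) (ε : ZMod 2) :
    prefl cs i (t, ε) = (σ i * t * σ i, ε + if t = σ i then 1 else 0) := rfl

lemma conj_simple_eq_iff (j : B) (x y : W) : σ j * x * σ j = y ↔ x = σ j * y * σ j := by
  constructor
  · rintro rfl
    rw [← mul_assoc, ← mul_assoc, cs.simple_mul_simple_self, one_mul, mul_assoc,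
      cs.simple_mul_simple_self, mul_one]
  · rintro rfl
    rw [← mul_assoc, ← mul_assoc, cs.simple_mul_simple_self, one_mul, mul_assoc,
      cs.simple_mul_simple_self, mul_one]

lemma simple_mul_pow (i i' : B) (k : ℕ) :
    σ i' * (σ i * σ i') ^ k = ((σ i * σ i') ^ k)⁻¹ * σ i' := by
  induction k with
  | zero => simp
  | succ k ih =>
    have hp : σ i' * (σ i * σ i') = (σ i * σ i')⁻¹ * σ i' := by
      rw [mul_inv_rev, cs.inv_simple, cs.inv_simple]; group
    rw [pow_succ', ← mul_assoc, hp, mul_assoc, ih, ← mul_assoc, ← mul_inv_rev]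
    rw [← pow_succ, ← pow_succ']

lemma prefl_mul_pow_apply (i i' : B) (k : ℕ) (t : W) (ε : ZMod 2) :
    ((prefl cs i * prefl cs i') ^ k) (t, ε) =
      ((σ i * σ i') ^ k * t * ((σ i * σ i') ^ k)⁻¹,
        ε + ((List.range (2 * k)).map
          (fun n => if (σ i * σ i') ^ n * t = σ i' then (1 : ZMod 2) else 0)).sum) := by
  induction k with
  | zero => simp
  | succ k ih =>
    have key2 : σ i' * σ i * σ i' * (σ i * σ i') ^ k = ((σ i * σ i') ^ (k + 1))⁻¹ * σ i' := by
      rw [mul_assoc (σ i' * σ i), simple_mul_pow cs i i' k, pow_succ, mul_inv_rev,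
        mul_inv_rev, cs.inv_simple, cs.inv_simple]
      group
    have hc1 : ((σ i * σ i') ^ k * t * ((σ i * σ i') ^ k)⁻¹ = σ i')
        ↔ ((σ i * σ i') ^ (2 * k) * t = σ i') := by
      rw [mul_inv_eq_iff_eq_mul, simple_mul_pow cs i i' k, eq_inv_mul_iff_mul_eq,
        ← mul_assoc, ← pow_add, two_mul]
    have hc2 : (σ i' * ((σ i * σ i') ^ k * t * ((σ i * σ i') ^ k)⁻¹) * σ i' = σ i)
        ↔ ((σ i * σ i') ^ (2 * k + 1) * t = σ i') := by
      rw [conj_simple_eq_iff, mul_inv_eq_iff_eq_mul, key2, eq_inv_mul_iff_mul_eq,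
        ← mul_assoc, ← pow_add, show k + 1 + k = 2 * k + 1 from by ring]
    rw [pow_succ', Equiv.Perm.mul_apply, ih, Equiv.Perm.mul_apply, prefl_apply, prefl_apply]
    rw [Prod.mk.injEq]
    constructor
    · rw [pow_succ', mul_inv_rev, mul_inv_rev, cs.inv_simple, cs.inv_simple]
      group
    · rw [if_congr hc1 rfl rfl, if_congr hc2 rfl rfl,
        show 2 * (k + 1) = (2 * k + 1) + 1 from by ring, List.range_succ, List.range_succ]
      simp only [List.map_append, List.sum_append, List.map_cons, List.map_nil,
        List.sum_cons, List.sum_nil]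
      abel

lemma prefl_liftable : M.IsLiftable (prefl cs) := by
  intro i i'
  rcases Nat.eq_zero_or_pos (M i i') with h | h
  · rw [h, pow_zero]
  · apply Equiv.ext
    rintro ⟨t, ε⟩
    have hp : (σ i * σ i') ^ (M i i') = 1 := cs.simple_mul_simple_pow i i'
    rw [prefl_mul_pow_apply, hp, Equiv.Perm.one_apply]
    rw [Prod.mk.injEq]
    constructor
    · group
    · have hS : ((List.range (2 * M i i')).map
          (fun n => if (σ i * σ i') ^ n * t = σ i' then (1 : ZMod 2) else 0)).sum = 0 := by
        rw [two_mul, List.range_add, List.map_append, List.sum_append, List.map_map]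
        have : ((List.range (M i i')).map
            ((fun n => if (σ i * σ i') ^ n * t = σ i' then (1 : ZMod 2) else 0) ∘
              (fun x => M i i' + x))) = (List.range (M i i')).map
            (fun n => if (σ i * σ i') ^ n * t = σ i' then (1 : ZMod 2) else 0) := by
          apply List.map_congr_left
          intro n _
          simp only [Function.comp_apply, pow_add, hp, one_mul]
        rw [this, zmod2_add_self]
      rw [hS, add_zero]

/-- The reflection-parity homomorphism. -/
noncomputable def theta : W →* Equiv.Perm (W × ZMod 2) :=
  cs.lift ⟨prefl cs, prefl_liftable cs⟩

lemma theta_simple (i : B) : theta cs (σ i) = prefl cs i :=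
  cs.lift_apply_simple (prefl_liftable cs) i

lemma theta_wordProd (ω : List B) (t : W) (ε : ZMod 2) :
    theta cs (π ω) (t, ε) = (π ω * t * (π ω)⁻¹, ε + ctr (cs.rightInvSeq ω) t) := by
  induction ω generalizing t ε with
  | nil => simp [ctr_nil]
  | cons i ω ih =>
    rw [cs.wordProd_cons, map_mul, theta_simple, Equiv.Perm.mul_apply, ih, prefl_apply]
    have hris : cs.rightInvSeq (i :: ω) = ((π ω)⁻¹ * σ i * π ω) :: cs.rightInvSeq ω := rfl
    rw [hris, ctr_cons, Prod.mk.injEq]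
    constructor
    · rw [mul_inv_rev, cs.inv_simple]; group
    · have hiff : (π ω * t * (π ω)⁻¹ = σ i) ↔ ((π ω)⁻¹ * σ i * π ω = t) := by
        constructor
        · intro h; rw [← h]; group
        · intro h; rw [← h]; group
      rw [if_congr hiff rfl rfl]
      abel

/-- The parity of the number of times `t` occurs in the right inversion sequence of any
word for `w`. -/
noncomputable def eta (w t : W) : ZMod 2 := ((theta cs w) (t, 0)).2

lemma eta_wordProd (ω : List B) (t : W) : eta cs (π ω) t = ctr (cs.rightInvSeq ω) t := by
  unfold eta
  rw [theta_wordProd, zero_add]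

lemma theta_apply (w t : W) (ε : ZMod 2) :
    theta cs w (t, ε) = (w * t * w⁻¹, ε + eta cs w t) := by
  obtain ⟨ω, rfl⟩ := cs.wordProd_surjective w
  rw [theta_wordProd, eta_wordProd]

lemma eta_mul (a b t : W) : eta cs (a * b) t = eta cs a (b * t * b⁻¹) + eta cs b t := by
  have h : theta cs (a * b) (t, 0) = theta cs a (theta cs b (t, 0)) := by
    rw [map_mul, Equiv.Perm.mul_apply]
  rw [theta_apply, theta_apply, theta_apply] at h
  have := congrArg Prod.snd h
  simp only at this
  rw [show (0 : ZMod 2) + eta cs (a * b) t = eta cs (a * b) t from zero_add _] at this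
  rw [this]
  abel

lemma ris_append (α β : List B) :
    cs.rightInvSeq (α ++ β) =
      (cs.rightInvSeq α).map (fun r => (π β)⁻¹ * r * π β) ++ cs.rightInvSeq β := by
  induction α with
  | nil => simp
  | cons i α ih =>
    have h1 : cs.rightInvSeq ((i :: α) ++ β)
        = ((π (α ++ β))⁻¹ * σ i * π (α ++ β)) :: cs.rightInvSeq (α ++ β) := rfl
    have h2 : cs.rightInvSeq (i :: α) = ((π α)⁻¹ * σ i * π α) :: cs.rightInvSeq α := rfl
    rw [h1, ih, h2, List.map_cons]
    simp only [List.cons_append]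
    congr 1
    rw [cs.wordProd_append, mul_inv_rev]
    group

lemma lis_eq_map_ris (ω : List B) :
    cs.leftInvSeq ω = (cs.rightInvSeq ω).map (fun r => π ω * r * (π ω)⁻¹) := by
  induction ω with
  | nil => simp
  | cons i ω ih =>
    have h1 : cs.leftInvSeq (i :: ω)
        = σ i :: (cs.leftInvSeq ω).map (MulAut.conj (σ i)) := rfl
    have h2 : cs.rightInvSeq (i :: ω) = ((π ω)⁻¹ * σ i * π ω) :: cs.rightInvSeq ω := rfl
    rw [h1, h2, List.map_cons, ih, List.map_map, cs.wordProd_cons]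
    congr 1
    · rw [mul_inv_rev, cs.inv_simple]
      simp [mul_assoc, inv_mul_cancel_left, cs.simple_mul_simple_cancel_left]
    · apply List.map_congr_left
      intro r _
      simp only [Function.comp_apply, MulAut.conj_apply, mul_inv_rev, cs.inv_simple]
      group

lemma eta_mul_reflection (w t : W) (ht : cs.IsReflection t) :
    eta cs (w * t) t = eta cs w t + 1 := by
  obtain ⟨c, k, hT⟩ := ht
  obtain ⟨γ, hγ⟩ := cs.wordProd_surjective c
  obtain ⟨ω₁, hω₁⟩ := cs.wordProd_surjective w
  set τ : List B := γ ++ k :: γ.reverse with hτ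
  have hπτ : π τ = t := by
    rw [hτ, cs.wordProd_append, cs.wordProd_cons, cs.wordProd_reverse, hγ, hT, mul_assoc]
  have hwt : π (ω₁ ++ τ) = w * t := by rw [cs.wordProd_append, hω₁, hπτ]
  have conj_inj : ∀ a b : W, Function.Injective (fun r => a * r * b) := by
    intro a b x y hxy
    simp only at hxy
    exact mul_left_cancel (mul_right_cancel hxy)
  -- the main count
  have hmain : ctr (cs.rightInvSeq (ω₁ ++ τ)) t = ctr (cs.rightInvSeq ω₁) t + ctr (cs.rightInvSeq τ) t := by
    rw [ris_append, ctr_append]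
    congr 1
    have hfix : t = (fun r => (π τ)⁻¹ * r * π τ) t := by
      simp only [hπτ]
      group
    nth_rw 1 [hfix]
    exact ctr_map_of_injective _ _ (conj_inj _ _) t
  -- ctr over τ is 1
  have hτ1 : ctr (cs.rightInvSeq τ) t = 1 := by
    have hd : cs.rightInvSeq (k :: γ.reverse)
        = ((π γ.reverse)⁻¹ * σ k * π γ.reverse) :: cs.rightInvSeq γ.reverse := rfl
    have hhead : (π γ.reverse)⁻¹ * σ k * π γ.reverse = t := by
      rw [cs.wordProd_reverse, inv_inv, hγ, hT]
    rw [hτ, ris_append, ctr_append, hd, hhead, ctr_cons, if_pos rfl]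
    have hb : π (k :: γ.reverse) = σ k * c⁻¹ := by
      rw [cs.wordProd_cons, cs.wordProd_reverse, hγ]
    -- first part: conjugated copies of ris γ
    have hg : t = (fun r => (π (k :: γ.reverse))⁻¹ * r * π (k :: γ.reverse)) (σ k) := by
      simp only [hb, mul_inv_rev, inv_inv, cs.inv_simple, hT]
      rw [cs.simple_mul_simple_cancel_right, mul_assoc]
    have h5 : ctr ((cs.rightInvSeq γ).map
        (fun r => (π (k :: γ.reverse))⁻¹ * r * π (k :: γ.reverse))) t
        = ctr (cs.rightInvSeq γ) (σ k) := by
      nth_rw 1 [hg]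
      exact ctr_map_of_injective _ _ (conj_inj _ _) (σ k)
    -- last part: reversed left inversion sequence
    have h6 : ctr (cs.rightInvSeq γ.reverse) t = ctr (cs.rightInvSeq γ) (σ k) := by
      rw [cs.rightInvSeq_reverse, ctr_reverse, lis_eq_map_ris]
      have hg2 : t = (fun r => π γ * r * (π γ)⁻¹) (σ k) := by simp only [hγ, hT]
      nth_rw 1 [hg2]
      exact ctr_map_of_injective _ _ (conj_inj _ _) (σ k)
    rw [h5, h6]
    have : ∀ x : ZMod 2, x + (1 + x) = 1 := by decide
    exact this _
  have e1 : eta cs (w * t) t = ctr (cs.rightInvSeq (ω₁ ++ τ)) t := by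
    rw [← hwt, eta_wordProd]
  have e2 : eta cs w t = ctr (cs.rightInvSeq ω₁) t := by rw [← hω₁, eta_wordProd]
  rw [e1, hmain, hτ1, e2]

lemma eta_one_of_lt (w t : W) (ht : cs.IsReflection t) (hl : ℒ (w * t) < ℒ w) :
    eta cs w t = 1 := by
  rcases zmod2_cases (eta cs w t) with h | h
  · exfalso
    have h1 : eta cs (w * t) t = 1 := by rw [eta_mul_reflection cs w t ht, h, zero_add]
    obtain ⟨ω, hred, hπ⟩ := cs.exists_reduced_word' (w * t)
    have h2 : t ∈ cs.rightInvSeq ω := by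
      by_contra hmem
      rw [hπ, eta_wordProd, ctr_eq_zero_of_not_mem _ _ hmem] at h1
      exact one_ne_zero h1.symm
    have h3 := cs.isRightInversion_of_mem_rightInvSeq hred h2
    rw [← hπ] at h3
    have h4 : w * t * t = w := by rw [mul_assoc, CoxeterSystem.IsReflection.mul_self ht, mul_one]
    have h5 := h3.2
    rw [h4] at h5
    omega
  · exact h

lemma mem_ris_of_lt (ω : List B) (t : W) (ht : cs.IsReflection t)
    (hl : ℒ (π ω * t) < ℒ (π ω)) : t ∈ cs.rightInvSeq ω := by
  have h1 : eta cs (π ω) t = 1 := eta_one_of_lt cs _ _ ht hl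
  by_contra hmem
  rw [eta_wordProd, ctr_eq_zero_of_not_mem _ _ hmem] at h1
  exact one_ne_zero h1.symm

lemma strong_exchange (ω : List B) (t : W) (ht : cs.IsReflection t)
    (hl : ℒ (π ω * t) < ℒ (π ω)) :
    ∃ j < ω.length, π ω * t = π (ω.eraseIdx j) := by
  have h2 := mem_ris_of_lt cs ω t ht hl
  obtain ⟨j, hj, hget⟩ := List.getElem_of_mem h2
  refine ⟨j, by simpa using hj, ?_⟩
  have hD : (cs.rightInvSeq ω).getD j 1 = t := by rw [List.getD_eq_getElem _ _ hj, hget]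
  rw [← hD, cs.wordProd_mul_getD_rightInvSeq]

lemma left_exchange (ω : List B) (t : W) (ht : cs.IsReflection t)
    (hl : ℒ (t * π ω) < ℒ (π ω)) : t ∈ cs.leftInvSeq ω := by
  have h1 : ℒ (π ω.reverse * t) < ℒ (π ω.reverse) := by
    rw [cs.wordProd_reverse]
    have e1 : ℒ ((π ω)⁻¹ * t) = ℒ (t * π ω) := by
      rw [← cs.length_inv, mul_inv_rev, inv_inv, CoxeterSystem.IsReflection.inv ht]
    rw [e1, cs.length_inv]
    exact hl
  have h2 := mem_ris_of_lt cs ω.reverse t ht h1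
  rw [cs.rightInvSeq_reverse] at h2
  exact List.mem_reverse.mp h2

lemma left_exchange' (ω : List B) (t : W) (ht : cs.IsReflection t)
    (hl : ℒ (t * π ω) < ℒ (π ω)) :
    ∃ j < ω.length, t * π ω = π (ω.eraseIdx j) := by
  have h2 := left_exchange cs ω t ht hl
  obtain ⟨j, hj, hget⟩ := List.getElem_of_mem h2
  refine ⟨j, by simpa using hj, ?_⟩
  have hD : (cs.leftInvSeq ω).getD j 1 = t := by rw [List.getD_eq_getElem _ _ hj, hget]
  rw [← hD, cs.getD_leftInvSeq_mul_wordProd]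

lemma deletion (ω : List B) (h : ¬ cs.IsReduced ω) :
    ∃ ω' : List B, ω'.length + 2 = ω.length ∧ π ω' = π ω ∧ ∀ b ∈ ω', b ∈ ω := by
  have hne : ω ≠ [] := by
    rintro rfl
    exact h (by simp [CoxeterSystem.IsReduced])
  have hlpos : 0 < ω.length := List.length_pos_iff.mpr hne
  have hex : ∃ n, ¬ cs.IsReduced (ω.take (n + 1)) := by
    refine ⟨ω.length - 1, ?_⟩
    rwa [show ω.length - 1 + 1 = ω.length from by omega, List.take_length]
  classical
  set j := Nat.find hex with hjdef
  have hj : ¬ cs.IsReduced (ω.take (j + 1)) := Nat.find_spec hex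
  have hjle : j ≤ ω.length - 1 := Nat.find_min' hex (by
    rwa [show ω.length - 1 + 1 = ω.length from by omega, List.take_length])
  have hjlt : j < ω.length := by omega
  have hredj : cs.IsReduced (ω.take j) := by
    rcases Nat.eq_zero_or_pos j with h0 | h0
    · rw [h0]; simp [CoxeterSystem.IsReduced]
    · have := Nat.find_min hex (m := j - 1) (by omega)
      rw [show j - 1 + 1 = j from by omega] at this
      exact not_not.mp this
  set b := ω[j]'hjlt with hbdef
  have htake : ω.take (j + 1) = ω.take j ++ [b] := by
    rw [List.take_succ]
    congr
    rw [List.getElem?_eq_getElem hjlt]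
    rfl
  have hlen_takej : (ω.take j).length = j := by
    rw [List.length_take]; omega
  have hlj : ℒ (π (ω.take j)) = j := by
    have := hredj
    rwa [CoxeterSystem.IsReduced, hlen_takej] at this
  have hdesc : ℒ (π (ω.take j) * σ b) < ℒ (π (ω.take j)) := by
    have hππ : π (ω.take (j + 1)) = π (ω.take j) * σ b := by
      rw [htake, cs.wordProd_append, cs.wordProd_singleton]
    have hlen1 : (ω.take (j + 1)).length = j + 1 := by
      rw [List.length_take]; omega
    have hne1 : ℒ (π (ω.take j) * σ b) ≠ j + 1 := by
      intro hcontra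
      apply hj
      rw [CoxeterSystem.IsReduced, hππ, hlen1, hcontra]
    rcases cs.length_mul_simple (π (ω.take j)) b with hc | hc
    · exfalso; rw [hlj] at hc; exact hne1 hc
    · rw [hlj] at hc ⊢; omega
  obtain ⟨l, hl, hexch⟩ := strong_exchange cs (ω.take j) (σ b)
    (cs.isReflection_simple b) hdesc
  refine ⟨(ω.take j).eraseIdx l ++ ω.drop (j + 1), ?_, ?_, ?_⟩
  · have h1 : ((ω.take j).eraseIdx l).length + 1 = j := by
      have := List.length_eraseIdx_add_one hl
      rwa [hlen_takej] at this
    rw [List.length_append, List.length_drop]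
    omega
  · have hsplit : π ω = π (ω.take j) * σ b * π (ω.drop (j + 1)) := by
      conv_lhs => rw [← List.take_append_drop (j + 1) ω]
      rw [cs.wordProd_append, htake, cs.wordProd_append, cs.wordProd_singleton]
    rw [cs.wordProd_append, ← hexch, hsplit]
  · intro b' hb'
    rcases List.mem_append.mp hb' with hmem | hmem
    · exact List.Sublist.mem (List.Sublist.mem hmem (List.eraseIdx_sublist (ω.take j) l))
        (List.take_sublist j ω)
    · exact List.Sublist.mem hmem (List.drop_sublist (j + 1) ω)


section Parabolic

variable (J : Set B)

lemma memWJ_one : MemWJ cs J 1 := Subgroup.one_mem _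

lemma memWJ_mul {u v : W} (hu : MemWJ cs J u) (hv : MemWJ cs J v) : MemWJ cs J (u * v) :=
  Subgroup.mul_mem _ hu hv

lemma memWJ_inv {u : W} (hu : MemWJ cs J u) : MemWJ cs J u⁻¹ :=
  Subgroup.inv_mem _ hu

lemma memWJ_simple {j : B} (hj : j ∈ J) : MemWJ cs J (σ j) :=
  Subgroup.subset_closure ⟨j, hj, rfl⟩

lemma wordProd_memWJ {ω : List B} (hJ : ∀ b ∈ ω, b ∈ J) : MemWJ cs J (π ω) := by
  induction ω with
  | nil => exact memWJ_one cs J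
  | cons i ω ih =>
    rw [cs.wordProd_cons]
    exact memWJ_mul cs J (memWJ_simple cs J (hJ i (List.mem_cons_self)))
      (ih (fun b hb => hJ b (List.mem_cons_of_mem i hb)))

lemma memWJ_word {v : W} (hv : MemWJ cs J v) :
    ∃ ω : List B, (∀ b ∈ ω, b ∈ J) ∧ π ω = v := by
  induction hv using Subgroup.closure_induction with
  | mem x hx =>
    obtain ⟨j, hj, rfl⟩ := hx
    exact ⟨[j], by simpa using hj, cs.wordProd_singleton j⟩
  | one => exact ⟨[], by simp, cs.wordProd_nil⟩
  | mul x y hx hy ihx ihy =>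
    obtain ⟨ω₁, h1, rfl⟩ := ihx
    obtain ⟨ω₂, h2, rfl⟩ := ihy
    exact ⟨ω₁ ++ ω₂, fun b hb => (List.mem_append.mp hb).elim (h1 b) (h2 b),
      cs.wordProd_append ω₁ ω₂⟩
  | inv x hx ihx =>
    obtain ⟨ω₁, h1, rfl⟩ := ihx
    exact ⟨ω₁.reverse, fun b hb => h1 b (List.mem_reverse.mp hb), cs.wordProd_reverse ω₁⟩

lemma exists_reduced_J_word {v : W} (hv : MemWJ cs J v) :
    ∃ ω : List B, (∀ b ∈ ω, b ∈ J) ∧ cs.IsReduced ω ∧ π ω = v := by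
  obtain ⟨ω, hJ, hπ⟩ := memWJ_word cs J hv
  subst hπ
  have H : ∀ n (ω : List B), ω.length ≤ n → (∀ b ∈ ω, b ∈ J) →
      ∃ ω' : List B, (∀ b ∈ ω', b ∈ J) ∧ cs.IsReduced ω' ∧ π ω' = π ω := by
    intro n
    induction n with
    | zero =>
      intro ω hlen _
      have : ω = [] := List.length_eq_zero_iff.mp (Nat.le_zero.mp hlen)
      subst this
      exact ⟨[], by simp, by simp [CoxeterSystem.IsReduced], rfl⟩
    | succ n ih =>
      intro ω hlen hJω
      by_cases hred : cs.IsReduced ω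
      · exact ⟨ω, hJω, hred, rfl⟩
      · obtain ⟨ω', hlen', hπ', hmem'⟩ := deletion cs ω hred
        obtain ⟨ω'', h1, h2, h3⟩ := ih ω' (by omega) (fun b hb => hJω b (hmem' b hb))
        exact ⟨ω'', h1, h2, h3.trans hπ'⟩
  exact H ω.length ω le_rfl hJ

/-- Key additivity: lengths add across a minimal coset representative. -/
lemma minRep_mul {w : W} (hw : IsMinRep cs J w) {v : W} (hv : MemWJ cs J v) :
    ℒ (w * v) = ℒ w + ℒ v := by
  have H : ∀ n, ∀ w : W, ℒ w ≤ n → IsMinRep cs J w → ∀ v : W, MemWJ cs J v →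
      ℒ (w * v) = ℒ w + ℒ v := by
    intro n
    induction n with
    | zero =>
      intro w hlen _ v hv
      have hw1 : w = 1 := cs.length_eq_zero_iff.mp (Nat.le_zero.mp hlen)
      subst hw1
      simp
    | succ n ih =>
      intro w hlen hw v hv
      rcases eq_or_ne w 1 with rfl | hne
      · simp
      · obtain ⟨i, hi⟩ := cs.exists_leftDescent_of_ne_one hne
        have hlw : ℒ (σ i * w) + 1 = ℒ w := by
          rcases cs.length_simple_mul w i with hc | hc
          · exfalso; unfold CoxeterSystem.IsLeftDescent at hi; omega
          · exact hc
        set w₁ := σ i * w with hw₁def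
        have hww : w = σ i * w₁ := by
          rw [hw₁def, ← mul_assoc, cs.simple_mul_simple_self, one_mul]
        have hw₁min : IsMinRep cs J w₁ := by
          intro j hj
          have h1 : ℒ (w * σ j) = ℒ w + 1 := hw j hj
          have h2 : w₁ * σ j = σ i * (w * σ j) := by rw [hw₁def, mul_assoc]
          rcases cs.length_simple_mul (w * σ j) i with hc | hc
          · exfalso
            -- then ℒ(w₁ σ j) = ℒ w + 2, but ℒ(w₁ σ j) ≤ ℒ w₁ + 1 = ℒ w
            rw [← h2] at hc
            have h3 : ℒ (w₁ * σ j) ≤ ℒ w₁ + 1 := by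
              have := cs.length_mul_le w₁ (σ j)
              rwa [cs.length_simple] at this
            omega
          · rw [← h2] at hc
            omega
      -- now the inductive argument
        have hlen₁ : ℒ w₁ ≤ n := by omega
        have ihw₁ : ∀ v : W, MemWJ cs J v → ℒ (w₁ * v) = ℒ w₁ + ℒ v :=
          fun v hv => ih w₁ hlen₁ hw₁min v hv
        have hmain : ℒ (w₁ * v) = ℒ w₁ + ℒ v := ihw₁ v hv
        -- goal : ℒ (w * v) = ℒ w + ℒ v, w * v = σ i * (w₁ * v)
        have hwv : w * v = σ i * (w₁ * v) := by rw [hww, mul_assoc]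
        rcases cs.length_simple_mul (w₁ * v) i with hc | hc
        · rw [← hwv] at hc; omega
        · -- bad case : σ i is a left descent of w₁ * v
          exfalso
          obtain ⟨α₁, hα₁red, hα₁⟩ := cs.exists_reduced_word' w₁
          obtain ⟨β, hβJ, hβred, hβ⟩ := exists_reduced_J_word cs J hv
          have hword : π (α₁ ++ β) = w₁ * v := by rw [cs.wordProd_append, ← hα₁, ← hβ]
          have hdesc : ℒ (σ i * π (α₁ ++ β)) < ℒ (π (α₁ ++ β)) := by rw [hword]; omega
          obtain ⟨j, hjlt, hexch⟩ := left_exchange' cs (α₁ ++ β) (σ i)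
            (cs.isReflection_simple i) hdesc
          rw [hword] at hexch
          rcases Nat.lt_or_ge j α₁.length with hcase | hcase
          · -- erase in the α₁ part : contradicts ℒ w = ℒ w₁ + 1
            rw [List.eraseIdx_append_of_lt_length hcase, cs.wordProd_append, hβ,
              ← hwv] at hexch
            have hwe : w = π (α₁.eraseIdx j) := mul_right_cancel hexch
            have hle1 : ℒ w ≤ (α₁.eraseIdx j).length := by
              rw [hwe]; exact cs.length_wordProd_le _
            have hlee : (α₁.eraseIdx j).length + 1 = α₁.length :=
              List.length_eraseIdx_add_one hcase
            have hα₁len : α₁.length = ℒ w₁ := by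
              have := hα₁red
              rw [CoxeterSystem.IsReduced, ← hα₁] at this
              omega
            omega
          · -- erase in the β part : contradicts minimality of w
            rw [List.eraseIdx_append_of_length_le hcase, cs.wordProd_append, ← hα₁,
              ← hwv] at hexch
            set v₂ := π (β.eraseIdx (j - α₁.length)) with hv₂def
            have hv₂ : MemWJ cs J v₂ :=
              wordProd_memWJ cs J (fun b hb =>
                hβJ b (List.Sublist.mem hb (List.eraseIdx_sublist β (j - α₁.length))))
            have hr : MemWJ cs J (v₂ * v⁻¹) := memWJ_mul cs J hv₂ (memWJ_inv cs J hv)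
            have hwr : w = w₁ * (v₂ * v⁻¹) := by
              rw [← mul_assoc, ← hexch]; group
            have hlr : ℒ w = ℒ w₁ + ℒ (v₂ * v⁻¹) := by
              rw [hwr] at *
              exact ih w₁ hlen₁ hw₁min _ hr
            have hlr1 : ℒ (v₂ * v⁻¹) = 1 := by omega
            obtain ⟨γ, hγJ, hγred, hγ⟩ := exists_reduced_J_word cs J hr
            have hγlen : γ.length = 1 := by
              have := hγred
              rw [CoxeterSystem.IsReduced, hγ, hlr1] at this
              omega
            obtain ⟨j₀, rfl⟩ := List.length_eq_one_iff.mp hγlen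
            have hj₀ : j₀ ∈ J := hγJ j₀ (List.mem_singleton_self j₀)
            have hreq : v₂ * v⁻¹ = σ j₀ := by rw [← hγ, cs.wordProd_singleton]
            have hws : w = w₁ * σ j₀ := by rw [hwr, hreq]
            have hcontr : ℒ (w * σ j₀) = ℒ w₁ := by
              rw [hws, cs.simple_mul_simple_cancel_right]
            have := hw j₀ hj₀
            omega
  exact H (ℒ w) w le_rfl hw v hv

end Parabolic

section Parabolic2

variable (J : Set B)

lemma exists_minRep_decomp (y : W) :
    ∃ m v : W, IsMinRep cs J m ∧ MemWJ cs J v ∧ y = m * v := by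
  classical
  have hne : ∃ n, ∃ v : W, MemWJ cs J v ∧ ℒ (y * v) = n :=
    ⟨ℒ y, 1, memWJ_one cs J, by simp⟩
  obtain ⟨v₀, hv₀, hlv₀⟩ := Nat.find_spec hne
  have hmin : ∀ v : W, MemWJ cs J v → Nat.find hne ≤ ℒ (y * v) := by
    intro v hv
    exact Nat.find_min' hne ⟨v, hv, rfl⟩
  refine ⟨y * v₀, v₀⁻¹, ?_, memWJ_inv cs J hv₀, by group⟩
  intro j hj
  have h1 : MemWJ cs J (v₀ * σ j) := memWJ_mul cs J hv₀ (memWJ_simple cs J hj)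
  have h2 := hmin _ h1
  rw [← mul_assoc] at h2
  rcases cs.length_mul_simple (y * v₀) j with hc | hc
  · exact hc
  · omega

lemma minRep_unique {m m' v : W} (hm : IsMinRep cs J m) (hm' : IsMinRep cs J m')
    (hv : MemWJ cs J v) (heq : m' = m * v) : m = m' ∧ v = 1 := by
  have h1 : ℒ m' = ℒ m + ℒ v := by rw [heq]; exact minRep_mul cs J hm hv
  have h2 : m = m' * v⁻¹ := by rw [heq]; group
  have h3 : ℒ m = ℒ m' + ℒ v⁻¹ := by
    rw [h2]; exact minRep_mul cs J hm' (memWJ_inv cs J hv)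
  rw [cs.length_inv] at h3
  have hv0 : ℒ v = 0 := by omega
  have hv1 : v = 1 := cs.length_eq_zero_iff.mp hv0
  exact ⟨by rw [heq, hv1, mul_one], hv1⟩

lemma ris_memWJ {ω : List B} (hJ : ∀ b ∈ ω, b ∈ J) :
    ∀ t ∈ cs.rightInvSeq ω, MemWJ cs J t := by
  induction ω with
  | nil => simp
  | cons i ω ih =>
    have h2 : cs.rightInvSeq (i :: ω) = ((π ω)⁻¹ * σ i * π ω) :: cs.rightInvSeq ω := rfl
    rw [h2]
    intro t ht
    rcases List.mem_cons.mp ht with rfl | hmem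
    · have h3 : MemWJ cs J (π ω) :=
        wordProd_memWJ cs J (fun b hb => hJ b (List.mem_cons_of_mem i hb))
      exact memWJ_mul cs J (memWJ_mul cs J (memWJ_inv cs J h3)
        (memWJ_simple cs J (hJ i (List.mem_cons_self)))) h3
    · exact ih (fun b hb => hJ b (List.mem_cons_of_mem i hb)) t hmem

/-- The set of right inversions. -/
def InvR (w : W) : Set W := {t | cs.IsReflection t ∧ ℒ (w * t) < ℒ w}

lemma invR_eq_ris {w : W} {ω : List B} (hred : cs.IsReduced ω) (hπ : w = π ω) :
    InvR cs w = {t | t ∈ cs.rightInvSeq ω} := by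
  ext t
  constructor
  · rintro ⟨ht, hlt⟩
    subst hπ
    exact mem_ris_of_lt cs ω t ht hlt
  · intro hmem
    have h := cs.isRightInversion_of_mem_rightInvSeq hred hmem
    rw [← hπ] at h
    exact ⟨h.1, h.2⟩

lemma lt_of_eta_one {w t : W} (ht : cs.IsReflection t) (h : eta cs w t = 1) :
    ℒ (w * t) < ℒ w := by
  obtain ⟨ω, hred, hπ⟩ := cs.exists_reduced_word' w
  have hmem : t ∈ cs.rightInvSeq ω := by
    by_contra hmem
    rw [hπ, eta_wordProd, ctr_eq_zero_of_not_mem _ _ hmem] at h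
    exact one_ne_zero h.symm
  have h2 := cs.isRightInversion_of_mem_rightInvSeq hred hmem
  rw [← hπ] at h2
  exact h2.2

lemma eta_iff {w t : W} (ht : cs.IsReflection t) :
    eta cs w t = 1 ↔ ℒ (w * t) < ℒ w :=
  ⟨lt_of_eta_one cs ht, eta_one_of_lt cs w t ht⟩

lemma length_eq_ncard_invR (w : W) : ℒ w = (InvR cs w).ncard := by
  obtain ⟨ω, hred, hπ⟩ := cs.exists_reduced_word' w
  rw [invR_eq_ris cs hred hπ]
  have h1 : {t | t ∈ cs.rightInvSeq ω} = ↑(cs.rightInvSeq ω).toFinset := by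
    ext t; simp
  rw [h1, Set.ncard_coe_finset, List.toFinset_card_of_nodup hred.nodup_rightInvSeq,
    cs.length_rightInvSeq, hπ]
  exact hred

/-- The set of reflections of `W_J`. -/
def TJ : Set W := {t | cs.IsReflection t ∧ MemWJ cs J t}

lemma invR_subset_TJ {w : W} (hw : MemWJ cs J w) : InvR cs w ⊆ TJ cs J := by
  obtain ⟨ω, hJω, hred, hπ⟩ := exists_reduced_J_word cs J hw
  intro t ht
  have h2 : t ∈ cs.rightInvSeq ω := by
    have := invR_eq_ris cs hred hπ.symm
    rw [this] at ht
    exact ht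
  exact ⟨ht.1, ris_memWJ cs J hJω t h2⟩

variable [Finite W]

lemma exists_longest : ∃ u₁ : W, MemWJ cs J u₁ ∧ ∀ v : W, MemWJ cs J v → ℒ v ≤ ℒ u₁ := by
  have hfin : {v : W | MemWJ cs J v}.Finite := Set.toFinite _
  have hne : hfin.toFinset.Nonempty :=
    ⟨1, by rw [Set.Finite.mem_toFinset]; exact memWJ_one cs J⟩
  obtain ⟨u₁, hu₁, hmax⟩ := Finset.exists_max_image hfin.toFinset (fun w => ℒ w) hne
  rw [Set.Finite.mem_toFinset] at hu₁
  exact ⟨u₁, hu₁, fun v hv => hmax v (by rw [Set.Finite.mem_toFinset]; exact hv)⟩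

variable {u₁ : W}

lemma TJ_eq_invR_longest (hu₁ : MemWJ cs J u₁)
    (hmax : ∀ v : W, MemWJ cs J v → ℒ v ≤ ℒ u₁) :
    InvR cs u₁ = TJ cs J := by
  apply Set.Subset.antisymm (invR_subset_TJ cs J hu₁)
  rintro t ⟨ht, htJ⟩
  refine ⟨ht, ?_⟩
  have h1 : ℒ (u₁ * t) ≤ ℒ u₁ := hmax _ (memWJ_mul cs J hu₁ htJ)
  have h2 : ℒ (u₁ * t) ≠ ℒ u₁ := ht.length_mul_left_ne u₁
  omega

lemma longest_mul (hu₁ : MemWJ cs J u₁)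
    (hmax : ∀ v : W, MemWJ cs J v → ℒ v ≤ ℒ u₁)
    {v : W} (hv : MemWJ cs J v) : ℒ (u₁ * v) + ℒ v = ℒ u₁ := by
  have hTJ := TJ_eq_invR_longest cs J hu₁ hmax
  have hdiff : InvR cs (u₁ * v) = TJ cs J \ InvR cs v := by
    ext t
    constructor
    · rintro ⟨ht, hlt⟩
      have htTJ : t ∈ TJ cs J := invR_subset_TJ cs J (memWJ_mul cs J hu₁ hv) ⟨ht, hlt⟩
      refine ⟨htTJ, ?_⟩
      rintro ⟨-, hltv⟩
      -- eta computation gives a contradiction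
      have e1 : eta cs (u₁ * v) t = 1 := eta_one_of_lt cs _ _ ht hlt
      have e2 : eta cs v t = 1 := eta_one_of_lt cs _ _ ht hltv
      have hconj : v * t * v⁻¹ ∈ TJ cs J :=
        ⟨ht.conj v, memWJ_mul cs J (memWJ_mul cs J hv htTJ.2) (memWJ_inv cs J hv)⟩
      have e3 : eta cs u₁ (v * t * v⁻¹) = 1 := by
        rw [← hTJ] at hconj
        exact eta_one_of_lt cs _ _ hconj.1 hconj.2
      have := eta_mul cs u₁ v t
      rw [e1, e2, e3] at this
      exact one_ne_zero (by rw [this]; decide : (1 : ZMod 2) = 0)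
    · rintro ⟨htTJ, hnot⟩
      refine ⟨htTJ.1, ?_⟩
      have e2 : eta cs v t = 0 := by
        rcases zmod2_cases (eta cs v t) with h | h
        · exact h
        · exact absurd ⟨htTJ.1, lt_of_eta_one cs htTJ.1 h⟩ hnot
      have hconj : v * t * v⁻¹ ∈ TJ cs J :=
        ⟨htTJ.1.conj v, memWJ_mul cs J (memWJ_mul cs J hv htTJ.2) (memWJ_inv cs J hv)⟩
      have e3 : eta cs u₁ (v * t * v⁻¹) = 1 := by
        rw [← hTJ] at hconj
        exact eta_one_of_lt cs _ _ hconj.1 hconj.2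
      have e1 : eta cs (u₁ * v) t = 1 := by
        rw [eta_mul cs u₁ v t, e2, e3, add_zero]
      exact lt_of_eta_one cs htTJ.1 e1
  have hsub : InvR cs v ⊆ TJ cs J := invR_subset_TJ cs J hv
  have hfin : (InvR cs v).Finite := Set.toFinite _
  have hTJfin : (TJ cs J).Finite := Set.toFinite _
  have hcard : (TJ cs J \ InvR cs v).ncard = (TJ cs J).ncard - (InvR cs v).ncard :=
    Set.ncard_diff hsub hfin
  have hle : (InvR cs v).ncard ≤ (TJ cs J).ncard := Set.ncard_le_ncard hsub hTJfin
  have l1 : ℒ (u₁ * v) = (TJ cs J \ InvR cs v).ncard := by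
    rw [← hdiff]; exact length_eq_ncard_invR cs _
  have l2 : ℒ v = (InvR cs v).ncard := length_eq_ncard_invR cs _
  have l3 : ℒ u₁ = (TJ cs J).ncard := by
    rw [← hTJ]; exact length_eq_ncard_invR cs _
  omega

lemma all_descents_eq_longest (hu₁ : MemWJ cs J u₁)
    (hmax : ∀ v : W, MemWJ cs J v → ℒ v ≤ ℒ u₁)
    {u₀ : W} (h0 : MemWJ cs J u₀)
    (hdesc : ∀ j ∈ J, ℒ (u₀ * σ j) < ℒ u₀) : u₀ = u₁ := by
  set z := u₁⁻¹ * u₀ with hzdef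
  have hz : MemWJ cs J z := memWJ_mul cs J (memWJ_inv cs J hu₁) h0
  have hu₀z : u₀ = u₁ * z := by rw [hzdef]; group
  rcases eq_or_ne z 1 with hz1 | hz1
  · rw [hu₀z, hz1, mul_one]
  · exfalso
    obtain ⟨γ, hγJ, hγred, hγ⟩ := exists_reduced_J_word cs J hz
    have hγne : γ ≠ [] := by
      rintro rfl
      rw [cs.wordProd_nil] at hγ
      exact hz1 hγ.symm
    set j₀ := γ.getLast hγne with hj₀def
    have hsplit : γ.dropLast ++ [j₀] = γ := List.dropLast_append_getLast hγne
    have hj₀J : j₀ ∈ J := hγJ j₀ (List.getLast_mem hγne)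
    have hzs : z * σ j₀ = π γ.dropLast := by
      have hh : π γ = π γ.dropLast * σ j₀ := by
        conv_lhs => rw [← hsplit]
        rw [cs.wordProd_append, cs.wordProd_singleton]
      rw [← hγ, hh, cs.simple_mul_simple_cancel_right]
    have hzsJ : MemWJ cs J (z * σ j₀) := by
      rw [hzs]
      exact wordProd_memWJ cs J (fun b hb => hγJ b (List.Sublist.mem hb (List.dropLast_sublist γ)))
    have hlz : ℒ z = γ.length := by rw [← hγ]; exact hγred
    have hlzs : ℒ (z * σ j₀) ≤ γ.length - 1 := by
      rw [hzs]
      have := cs.length_wordProd_le γ.dropLast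
      rw [List.length_dropLast] at this
      exact this
    have hγpos : 0 < γ.length := List.length_pos_iff.mpr hγne
    have e1 : ℒ (u₁ * z) + ℒ z = ℒ u₁ := longest_mul cs J hu₁ hmax hz
    have e2 : ℒ (u₁ * (z * σ j₀)) + ℒ (z * σ j₀) = ℒ u₁ := longest_mul cs J hu₁ hmax hzsJ
    have e3 : u₀ * σ j₀ = u₁ * (z * σ j₀) := by rw [hu₀z, mul_assoc]
    have := hdesc j₀ hj₀J
    rw [e3, ← hu₀z] at *
    omega

lemma maxRep_decomp {x : W} (hx : IsMaxRep cs J x)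
    (hu₁ : MemWJ cs J u₁) (hmax : ∀ v : W, MemWJ cs J v → ℒ v ≤ ℒ u₁) :
    ∃ m, IsMinRep cs J m ∧ x = m * u₁ := by
  obtain ⟨m, v, hm, hv, hxmv⟩ := exists_minRep_decomp cs J x
  have hdesc : ∀ j ∈ J, ℒ (v * σ j) < ℒ v := by
    intro j hj
    have h1 : ℒ (x * σ j) + 1 = ℒ x := hx j hj
    have h2 : x * σ j = m * (v * σ j) := by rw [hxmv, mul_assoc]
    have h3 : ℒ (x * σ j) = ℒ m + ℒ (v * σ j) := by
      rw [h2]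
      exact minRep_mul cs J hm (memWJ_mul cs J hv (memWJ_simple cs J hj))
    have h4 : ℒ x = ℒ m + ℒ v := by rw [hxmv]; exact minRep_mul cs J hm hv
    omega
  have : v = u₁ := all_descents_eq_longest cs J hu₁ hmax hv hdesc
  exact ⟨m, hm, by rw [hxmv, this]⟩

lemma maxRep_mul {x : W} (hx : IsMaxRep cs J x)
    (hu₁ : MemWJ cs J u₁) (hmax : ∀ v : W, MemWJ cs J v → ℒ v ≤ ℒ u₁)
    {v : W} (hv : MemWJ cs J v) : ℒ (x * v) + ℒ v = ℒ x := by
  obtain ⟨m, hm, rfl⟩ := maxRep_decomp cs J hx hu₁ hmax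
  have h1 : ℒ (m * u₁ * v) = ℒ m + ℒ (u₁ * v) := by
    rw [mul_assoc]
    exact minRep_mul cs J hm (memWJ_mul cs J hu₁ hv)
  have h2 : ℒ (m * u₁) = ℒ m + ℒ u₁ := minRep_mul cs J hm hu₁
  have h3 : ℒ (u₁ * v) + ℒ v = ℒ u₁ := longest_mul cs J hu₁ hmax hv
  omega

lemma maxRep_unique {x x' : W} (hx : IsMaxRep cs J x) (hx' : IsMaxRep cs J x')
    (hu₁ : MemWJ cs J u₁) (hmax : ∀ v : W, MemWJ cs J v → ℒ v ≤ ℒ u₁)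
    (hmem : MemWJ cs J (x⁻¹ * x')) : x = x' := by
  obtain ⟨m, hm, hxm⟩ := maxRep_decomp cs J hx hu₁ hmax
  obtain ⟨m', hm', hxm'⟩ := maxRep_decomp cs J hx' hu₁ hmax
  have hv : MemWJ cs J (u₁ * (x⁻¹ * x') * u₁⁻¹) :=
    memWJ_mul cs J (memWJ_mul cs J hu₁ hmem) (memWJ_inv cs J hu₁)
  have heq : m' = m * (u₁ * (x⁻¹ * x') * u₁⁻¹) := by
    have e1 : m' = x' * u₁⁻¹ := by rw [hxm']; group
    have e2 : m = x * u₁⁻¹ := by rw [hxm]; group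
    rw [e1, e2]
    group
  obtain ⟨hmm', -⟩ := minRep_unique cs J hm hm' hv heq
  rw [hxm, hxm', hmm']

end Parabolic2

section Bruhat

lemma ble_length {a b : W} (h : BLE cs a b) : ℒ a ≤ ℒ b := by
  induction h with
  | refl => exact le_rfl
  | tail h1 hstep ih =>
    have := hstep.2
    omega

lemma ble_eq_of_length {a b : W} (h : BLE cs a b) : ℒ b ≤ ℒ a → a = b := by
  induction h with
  | refl => intro _; rfl
  | tail h1 hstep ih =>
    intro hl
    exfalso
    have h2 := ble_length cs h1
    have h3 := hstep.2
    omega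

lemma ble_cov {a b : W} (h : BLE cs a b) (hl : ℒ b = ℒ a + 1) : BCov cs a b := by
  rcases Relation.ReflTransGen.cases_head h with heq | ⟨c, hac, hcb⟩
  · exfalso; rw [heq] at hl; omega
  · have hc : ℒ c = ℒ a + 1 := hac.2
    have hcb' : c = b := ble_eq_of_length cs hcb (by omega)
    rw [← hcb']
    exact hac

lemma ble_mul_right_minRep (J : Set B) {w v : W} (hw : IsMinRep cs J w) (hv : MemWJ cs J v) :
    BLE cs w (w * v) := by
  obtain ⟨β, hβJ, hβred, hβ⟩ := exists_reduced_J_word cs J hv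
  have H : ∀ k, k ≤ β.length → BLE cs w (w * π (β.take k)) := by
    intro k
    induction k with
    | zero =>
      intro _
      rw [List.take_zero, cs.wordProd_nil, mul_one]; exact Relation.ReflTransGen.refl
    | succ k ih =>
      intro hk1
      have hk : k ≤ β.length := by omega
      have hklt : k < β.length := by omega
      refine Relation.ReflTransGen.tail (ih hk) ?_
      have htake : β.take (k + 1) = β.take k ++ [β[k]] := by
        rw [List.take_succ, List.getElem?_eq_getElem hklt]
        rfl
      have hlen1 : (β.take k).length = k := by rw [List.length_take]; omega
      have hlen2 : (β.take (k + 1)).length = k + 1 := by rw [List.length_take]; omega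
      have hmem1 : MemWJ cs J (π (β.take k)) := wordProd_memWJ cs J
        (fun cb hcb => hβJ cb (List.Sublist.mem hcb (List.take_sublist k β)))
      have hmem2 : MemWJ cs J (π (β.take (k + 1))) := wordProd_memWJ cs J
        (fun cb hcb => hβJ cb (List.Sublist.mem hcb (List.take_sublist (k + 1) β)))
      have e1 : ℒ (w * π (β.take k)) = ℒ w + k := by
        rw [minRep_mul cs J hw hmem1]
        have hq := CoxeterSystem.IsReduced.take hβred k
        rw [CoxeterSystem.IsReduced, hlen1] at hq
        omega
      have e2 : ℒ (w * π (β.take (k + 1))) = ℒ w + (k + 1) := by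
        rw [minRep_mul cs J hw hmem2]
        have hq := CoxeterSystem.IsReduced.take hβred (k + 1)
        rw [CoxeterSystem.IsReduced, hlen2] at hq
        omega
      constructor
      · exact ⟨σ β[k], cs.isReflection_simple _,
          by rw [htake, cs.wordProd_append, cs.wordProd_singleton, mul_assoc]⟩
      · omega
  have := H β.length le_rfl
  rwa [List.take_length, hβ] at this

end Bruhat




theorem cover_dichotomy
    (cs : CoxeterSystem M W) [Finite W] (J : Set B)
    (a b : W × W × W)  -- `a = (x',u',w')` is covered by `b = (x,u,w)`
    (ha : MemIJ cs J a) (hb : MemIJ cs J b)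
    (hle : QleJ cs J a b) (hne : a ≠ b)
    (hrank : cellDim cs b = cellDim cs a + 1) :
    Xor'
      (a.2.2 = b.2.2 ∧ BCov cs (b.1 * b.2.1⁻¹) (a.1 * a.2.1⁻¹))
      (a.1 = b.1 ∧ a.2.2 ≠ b.2.2 ∧ BLE cs a.2.2 b.2.2 ∧
        BCov cs (a.2.2 * a.2.1) (b.2.2 * b.2.1)) := by
  obtain ⟨x', u', w'⟩ := a
  obtain ⟨x, u, w⟩ := b
  obtain ⟨hx'max, hu'J, hw'min, hx'le⟩ := ha
  obtain ⟨hxmax, huJ, hwmin, hxle⟩ := hb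
  obtain ⟨u₁, u₂, hu₁J, hu₂J, hu₁₂, hlu', hch1, hch2, hch3⟩ := hle
  obtain ⟨uL, huL, hmaxL⟩ := exists_longest cs J
  dsimp only at *
  -- length identities
  have e1 : cs.length (x * u⁻¹) + cs.length u = cs.length x := by
    have h := maxRep_mul cs J hxmax huL hmaxL (memWJ_inv cs J huJ)
    rwa [cs.length_inv] at h
  have e2 : cs.length (x' * u₂⁻¹) + cs.length u₂ = cs.length x' := by
    have h := maxRep_mul cs J hx'max huL hmaxL (memWJ_inv cs J hu₂J)
    rwa [cs.length_inv] at h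
  have e3 : cs.length (w' * u₁) = cs.length w' + cs.length u₁ := minRep_mul cs J hw'min hu₁J
  have e4 : cs.length (w * u) = cs.length w + cs.length u := minRep_mul cs J hwmin huJ
  have e5 : cs.length (w' * u') = cs.length w' + cs.length u' := minRep_mul cs J hw'min hu'J
  -- chain inequalities
  have i1 : cs.length (x * u⁻¹) ≤ cs.length (x' * u₂⁻¹) := ble_length cs hch1
  have i2 : cs.length (x' * u₂⁻¹) ≤ cs.length (w' * u₁) := ble_length cs hch2
  have i3 : cs.length (w' * u₁) ≤ cs.length w := ble_length cs hch3
  have i4 : cs.length x ≤ cs.length (w * u) := ble_length cs hxle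
  have i5 : cs.length x' ≤ cs.length (w' * u') := ble_length cs hx'le
  have hrank' : cs.length (w * u) - cs.length x
      = (cs.length (w' * u') - cs.length x') + 1 := hrank
  have hAB : (cs.length w = cs.length (w' * u₁)
        ∧ cs.length (x' * u₂⁻¹) = cs.length (x * u⁻¹) + 1)
      ∨ (cs.length w = cs.length (w' * u₁) + 1
        ∧ cs.length (x' * u₂⁻¹) = cs.length (x * u⁻¹)) := by
    omega
  rcases hAB with ⟨hB, hA⟩ | ⟨hB, hA⟩
  · -- Type 1 : w' = w, and x u⁻¹ is covered by x' u'⁻¹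
    have hw_eq : w' * u₁ = w := ble_eq_of_length cs hch3 (by omega)
    obtain ⟨hww', hu₁1⟩ := minRep_unique cs J hw'min hwmin hu₁J hw_eq.symm
    have hu₂u' : u₂ = u' := by rw [← hu₁₂, hu₁1, one_mul]
    have hcov : BCov cs (x * u⁻¹) (x' * u'⁻¹) := by
      have h := ble_cov cs hch1 (by omega)
      rwa [hu₂u'] at h
    exact Or.inl ⟨⟨hww', hcov⟩, fun hq => hq.2.1 hww'⟩
  · -- Type 2 : x' = x, w' < w, and w'u' is covered by wu
    have hxu_eq : x * u⁻¹ = x' * u₂⁻¹ := ble_eq_of_length cs hch1 (by omega)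
    have hmem : MemWJ cs J (x⁻¹ * x') := by
      have hx'e : x' = x * u⁻¹ * u₂ := by rw [hxu_eq]; group
      have : x⁻¹ * x' = u⁻¹ * u₂ := by rw [hx'e]; group
      rw [this]
      exact memWJ_mul cs J (memWJ_inv cs J huJ) hu₂J
    have hxx' : x = x' := maxRep_unique cs J hxmax hx'max huL hmaxL hmem
    have hu₂u : u₂ = u := by
      rw [hxx'] at hxu_eq
      have h := mul_left_cancel hxu_eq
      exact inv_injective h.symm
    have hwne : w' ≠ w := by
      intro hcontra
      rw [hcontra] at e3 hB
      omega
    have hble : BLE cs w' w :=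
      Relation.ReflTransGen.trans (ble_mul_right_minRep cs J hw'min hu₁J) hch3
    have hcov0 : BCov cs (w' * u₁) w := ble_cov cs hch3 (by omega)
    obtain ⟨⟨t, htrefl, hwt⟩, hlen⟩ := hcov0
    have hlu₂ : cs.length u₂ = cs.length u := by rw [hu₂u]
    have hcov : BCov cs (w' * u') (w * u) := by
      constructor
      · refine ⟨u⁻¹ * t * u, ?_, ?_⟩
        · have h := htrefl.conj u⁻¹
          rwa [inv_inv] at h
        · rw [hwt, ← hu₁₂, hu₂u]
          group
      · omega
    exact Or.inr ⟨⟨hxx'.symm, hwne, hble, hcov⟩, fun hp => hwne hp.1⟩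


end PaperStmt
end
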